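/- arXiv:math/0612534 — 3 statements merged into one kernel-verified Lean document; each statement's English description precedes it below -/
import Mathlib

section
/- Let β, β' ∈ ℝ⁶, R ∈ SO(2) a rotation matrix and t ∈ ℝ², and suppose that R · K(β)(x) · Rᵀ = K(β')(R x + t) for all x ∈ ℝ². Then Δ₂(β') = Δ₂(β), where Δ₂(β) = β₆(β₁+β₂) − β₄² − β₅². That is, Δ₂ is an invariant of the induced action of the special Euclidean group SE(2) on the six-dimensional space of Killing two-tensors of the Euclidean plane. -/
open Real Matrix

/-- The general Killing two-tensor of the Euclidean plane, as a symmetric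
2×2-matrix-valued function of the Cartesian coordinates, with parameters
`β 0, …, β 5` corresponding to `β₁, …, β₆`. -/
noncomputable def Kmat (β : Fin 6 → ℝ) (x : Fin 2 → ℝ) : Matrix (Fin 2) (Fin 2) ℝ :=
  !![β 0 + 2 * β 3 * x 1 + β 5 * (x 1) ^ 2,
     β 2 - β 3 * x 0 - β 4 * x 1 - β 5 * x 0 * x 1;
     β 2 - β 3 * x 0 - β 4 * x 1 - β 5 * x 0 * x 1,
     β 1 + 2 * β 4 * x 0 + β 5 * (x 0) ^ 2]

/-- The rotation matrix of `SO(2)` with angle `θ`. -/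
noncomputable def rot (θ : ℝ) : Matrix (Fin 2) (Fin 2) ℝ :=
  !![Real.cos θ, -Real.sin θ; Real.sin θ, Real.cos θ]

/-- The invariant `Δ₂(β) = β₆(β₁+β₂) − β₄² − β₅²`. -/
def Delta2 (β : Fin 6 → ℝ) : ℝ :=
  β 5 * (β 0 + β 1) - (β 3) ^ 2 - (β 4) ^ 2

/-! The trace of a Killing tensor is the rotation-invariant quadratic function
`q(x) = β₆|x|² + 2⟨(β₅, β₄), x⟩ + (β₁ + β₂)`, and `Δ₂` is its discriminant `ac - |b|²`.
Conjugating by a rotation preserves the trace, so the hypothesis says that the trace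
quadratics of `β` and `β'` differ by a Euclidean motion of the plane; completing the square
shows that the discriminant of `a|x|² + 2⟨b, x⟩ + c` is unchanged under `x ↦ Rx + t`. -/

section SphericalQuadratic

variable {n : Type*} [Fintype n] [DecidableEq n]

def sphericalQuadratic (a : ℝ) (b : n → ℝ) (c : ℝ) (x : n → ℝ) : ℝ :=
  a * (x ⬝ᵥ x) + 2 * (b ⬝ᵥ x) + c

theorem sphericalQuadratic_coeffs_eq [Nonempty n] {a a' c c' : ℝ} {b b' : n → ℝ}
    (h : ∀ x, sphericalQuadratic a b c x = sphericalQuadratic a' b' c' x) :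
    a = a' ∧ b = b' ∧ c = c' := by
  have hc : c = c' := by simpa [sphericalQuadratic] using h 0
  have hpm (i : n) : a + 2 * b i = a' + 2 * b' i ∧ a - 2 * b i = a' - 2 * b' i := by
    have hplus := h (Pi.single i 1)
    have hminus := h (-Pi.single i 1)
    simp only [sphericalQuadratic, dotProduct_neg, dotProduct_single, Pi.neg_apply,
      Pi.single_eq_same] at hplus hminus
    constructor <;> linarith
  obtain ⟨i⟩ := ‹Nonempty n›
  have ha : a = a' := by linarith [hpm i]
  refine ⟨ha, funext fun j => ?_, hc⟩
  linarith [hpm j]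

theorem sphericalQuadratic_mulVec_add {R : Matrix n n ℝ} (hR : Rᵀ * R = 1) (a : ℝ) (b : n → ℝ)
    (c : ℝ) (t x : n → ℝ) :
    sphericalQuadratic a b c (R *ᵥ x + t) =
      sphericalQuadratic a (Rᵀ *ᵥ (a • t + b)) (a * (t ⬝ᵥ t) + 2 * (b ⬝ᵥ t) + c) x := by
  have hRR : R *ᵥ x ⬝ᵥ R *ᵥ x = x ⬝ᵥ x := by
    rw [dotProduct_mulVec, ← mulVec_transpose, mulVec_mulVec, hR, one_mulVec]
  have hRt (v : n → ℝ) : Rᵀ *ᵥ v ⬝ᵥ x = v ⬝ᵥ R *ᵥ x := by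
    rw [mulVec_transpose, dotProduct_mulVec]
  simp only [sphericalQuadratic, hRt, add_dotProduct, dotProduct_add, smul_dotProduct, hRR,
    smul_eq_mul, dotProduct_comm t (R *ᵥ x)]
  ring

theorem sphericalQuadratic_disc_eq_of_comp [Nonempty n] {R : Matrix n n ℝ}
    (hR : Rᵀ * R = 1) {a a' c c' : ℝ} {b b' t : n → ℝ}
    (h : ∀ x, sphericalQuadratic a b c x = sphericalQuadratic a' b' c' (R *ᵥ x + t)) :
    a * c - b ⬝ᵥ b = a' * c' - b' ⬝ᵥ b' := by
  simp only [sphericalQuadratic_mulVec_add hR] at h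
  obtain ⟨rfl, rfl, rfl⟩ := sphericalQuadratic_coeffs_eq h
  have hRRt : R * Rᵀ = 1 := mul_eq_one_comm.mp hR
  rw [dotProduct_mulVec, ← mulVec_transpose, mulVec_mulVec, transpose_transpose, hRRt,
    one_mulVec]
  simp only [add_dotProduct, dotProduct_add, smul_dotProduct, dotProduct_smul, smul_eq_mul,
    dotProduct_comm t b']
  ring

end SphericalQuadratic

theorem rot_transpose_mul_self (θ : ℝ) : (rot θ)ᵀ * rot θ = 1 := by
  ext i j
  fin_cases i <;> fin_cases j <;>
    simp [rot, mul_apply, Fin.sum_univ_two, ← sq, cos_sq_add_sin_sq, sin_sq_add_cos_sq,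
      mul_comm]

theorem trace_Kmat (β : Fin 6 → ℝ) (x : Fin 2 → ℝ) :
    (Kmat β x).trace = sphericalQuadratic (β 5) ![β 4, β 3] (β 0 + β 1) x := by
  simp only [trace_fin_two, Kmat, of_apply, cons_val', cons_val_zero, cons_val_one,
    sphericalQuadratic, dotProduct, Fin.sum_univ_two]
  ring

theorem Delta2_eq_disc (β : Fin 6 → ℝ) :
    Delta2 β = β 5 * (β 0 + β 1) - ![β 4, β 3] ⬝ᵥ ![β 4, β 3] := by
  simp only [Delta2, dotProduct, Fin.sum_univ_two, cons_val_zero, cons_val_one,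
    cons_val_fin_one]
  ring

/-- `Δ₂` is an invariant of the induced action of `SE(2)` on the six-dimensional
space of Killing two-tensors of the Euclidean plane. -/
theorem Delta2_invariant
    (β β' : Fin 6 → ℝ) (θ : ℝ) (t : Fin 2 → ℝ)
    (h : ∀ x : Fin 2 → ℝ,
      rot θ * Kmat β x * (rot θ)ᵀ = Kmat β' ((rot θ).mulVec x + t)) :
    Delta2 β' = Delta2 β := by
  have htrace (x : Fin 2 → ℝ) : (Kmat β x).trace = (Kmat β' ((rot θ) *ᵥ x + t)).trace := by
    rw [← h x, trace_mul_cycle, rot_transpose_mul_self, one_mul]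
  simp only [trace_Kmat] at htrace
  rw [Delta2_eq_disc, Delta2_eq_disc]
  exact (sphericalQuadratic_disc_eq_of_comp (rot_transpose_mul_self θ) htrace).symm
end

section
/- Let β, β' ∈ ℝ⁶, R ∈ SO(2) a rotation matrix and t ∈ ℝ², and suppose that R · K(β)(x) · Rᵀ = K(β')(R x + t) for all x ∈ ℝ². Then Δ₃(β') = Δ₃(β), where Δ₃(β) = (β₆(β₁−β₂) − β₄² + β₅²)² + 4(β₆β₃ + β₄β₅)². That is, Δ₃ is an invariant of the induced action of the special Euclidean group SE(2) on the six-dimensional space of Killing two-tensors of the Euclidean plane. -/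
/-! Write `Δ₃ = u² + v²` with `u = β₆(β₁−β₂) − β₄² + β₅²` and `v = 2(β₆β₃ + β₄β₅)`. Acting by
`(R, t) ∈ SE(2)` on a Killing tensor changes its parameters by a rotation followed by a translation,
and these are the only parameters the transformed tensor can have, since a Killing tensor determines
its parameters. A translation fixes `u` and `v`, while the rotation by `θ` turns the vector `(u, v)`
by `2θ`; either way `u² + v²` is unchanged. -/

open Real Matrix

def Delta3 (β : Fin 6 → ℝ) : ℝ :=
  (β 5 * (β 0 - β 1) - (β 3) ^ 2 + (β 4) ^ 2) ^ 2 + 4 * (β 5 * β 2 + β 3 * β 4) ^ 2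

noncomputable def rotateParams (θ : ℝ) (β : Fin 6 → ℝ) : Fin 6 → ℝ :=
  let c := Real.cos θ
  let s := Real.sin θ
  ![c ^ 2 * β 0 + s ^ 2 * β 1 - 2 * c * s * β 2,
    s ^ 2 * β 0 + c ^ 2 * β 1 + 2 * c * s * β 2,
    c * s * (β 0 - β 1) + (c ^ 2 - s ^ 2) * β 2,
    c * β 3 + s * β 4,
    -s * β 3 + c * β 4,
    β 5]

def translateParams (t : Fin 2 → ℝ) (β : Fin 6 → ℝ) : Fin 6 → ℝ :=
  ![β 0 - 2 * t 1 * β 3 + t 1 ^ 2 * β 5,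
    β 1 - 2 * t 0 * β 4 + t 0 ^ 2 * β 5,
    β 2 + t 0 * β 3 + t 1 * β 4 - t 0 * t 1 * β 5,
    β 3 - t 1 * β 5,
    β 4 - t 0 * β 5,
    β 5]

theorem Kmat_injective : Function.Injective Kmat := by
  intro β β' h
  have entry (x : Fin 2 → ℝ) (i j : Fin 2) : Kmat β x i j = Kmat β' x i j := by rw [h]
  have h₀ := entry 0 0 0
  have h₁ := entry 0 1 1
  have h₂ := entry 0 0 1
  have h₃ := entry ![1, 0] 0 1
  have h₄ := entry ![0, 1] 0 1
  have h₅ := entry ![1, 0] 1 1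
  have h₅' := entry ![-1, 0] 1 1
  simp only [Kmat, of_apply, cons_val', cons_val_zero, cons_val_one, cons_val_fin_one,
    Pi.zero_apply] at h₀ h₁ h₂ h₃ h₄ h₅ h₅'
  funext i
  fin_cases i <;> simp only [Fin.zero_eta, Fin.mk_one, Fin.reduceFinMk] <;> linarith

theorem Kmat_translateParams_add (t : Fin 2 → ℝ) (β : Fin 6 → ℝ) (x : Fin 2 → ℝ) :
    Kmat (translateParams t β) (x + t) = Kmat β x := by
  ext i j
  fin_cases i <;> fin_cases j <;> simp [Kmat, translateParams] <;> ring

theorem rot_mul_Kmat_mul_transpose (θ : ℝ) (β : Fin 6 → ℝ) (x : Fin 2 → ℝ) :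
    rot θ * Kmat β x * (rot θ)ᵀ = Kmat (rotateParams θ β) (rot θ *ᵥ x) := by
  ext i j
  fin_cases i <;> fin_cases j <;>
    simp [Kmat, rot, rotateParams, mul_apply, Fin.sum_univ_two, mulVec, dotProduct] <;> ring

theorem rot_mul_transpose (θ : ℝ) : rot θ * (rot θ)ᵀ = 1 := by
  ext i j
  fin_cases i <;> fin_cases j <;> simp [rot, mul_apply, ← sq, mul_comm]

theorem Delta3_translateParams (t : Fin 2 → ℝ) (β : Fin 6 → ℝ) :
    Delta3 (translateParams t β) = Delta3 β := by
  simp only [Delta3, translateParams, Fin.isValue, cons_val, cons_val_zero, cons_val_one]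
  ring

theorem Delta3_rotateParams (θ : ℝ) (β : Fin 6 → ℝ) :
    Delta3 (rotateParams θ β) = Delta3 β := by
  have scaling : Delta3 (rotateParams θ β) = (cos θ ^ 2 + sin θ ^ 2) ^ 2 * Delta3 β := by
    simp only [Delta3, rotateParams, Fin.isValue, cons_val, cons_val_zero, cons_val_one]
    ring
  rw [scaling, cos_sq_add_sin_sq, one_pow, one_mul]

/-- `Δ₃` is an invariant of the induced action of `SE(2)` on the six-dimensional
space of Killing two-tensors of the Euclidean plane. -/
theorem Delta3_invariant
    (β β' : Fin 6 → ℝ) (θ : ℝ) (t : Fin 2 → ℝ)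
    (h : ∀ x : Fin 2 → ℝ,
      rot θ * Kmat β x * (rot θ)ᵀ = Kmat β' ((rot θ).mulVec x + t)) :
    Delta3 β' = Delta3 β := by
  have hβ' : β' = translateParams t (rotateParams θ β) := by
    refine Kmat_injective (funext fun y => ?_)
    obtain ⟨x, rfl⟩ : ∃ x, rot θ *ᵥ x + t = y :=
      ⟨(rot θ)ᵀ *ᵥ (y - t), by rw [mulVec_mulVec, rot_mul_transpose, one_mulVec, sub_add_cancel]⟩
    rw [← h, rot_mul_Kmat_mul_transpose, Kmat_translateParams_add]
  rw [hβ', Delta3_translateParams, Delta3_rotateParams]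
end

section
/- Let f : (0,∞) → ℝ be smooth and let V : ℝ² ∖ {0} → ℝ be the radial function V(x) = f(‖x‖). Then V satisfies the PDE 3∂₂V + x₂(∂₂₂V − ∂₁₁V) + 2x₁∂₁₂V = 0 on ℝ² ∖ {0} if and only if there exist constants m, n ∈ ℝ such that f(r) = m/r + n for all r > 0. -/
open Real

/-- Partial derivative with respect to the first Cartesian coordinate. -/
noncomputable def pd1 (f : ℝ × ℝ → ℝ) (x : ℝ × ℝ) : ℝ :=
  deriv (fun t => f (t, x.2)) x.1

/-- Partial derivative with respect to the second Cartesian coordinate. -/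
noncomputable def pd2 (f : ℝ × ℝ → ℝ) (x : ℝ × ℝ) : ℝ :=
  deriv (fun t => f (x.1, t)) x.2

/-- The radial function `V(x) = f(‖x‖)` on the punctured plane. -/
noncomputable def radial (f : ℝ → ℝ) : ℝ × ℝ → ℝ :=
  fun x => f (Real.sqrt (x.1 ^ 2 + x.2 ^ 2))

/-!
With `ρ = √(x₁² + x₂²)`, the Hessian of `V = f ∘ ρ` is
`∂ᵢⱼV = f''(ρ) xᵢxⱼ/ρ² + f'(ρ) (δᵢⱼ/ρ - xᵢxⱼ/ρ³)`, and substituting it collapses the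
Bertrand–Darboux expression to `x₂ (f''(ρ) + 2 f'(ρ)/ρ)`. Evaluating at `(0, r)`, the PDE is
therefore the radial ODE `f'' + 2 f'/r = 0` on `(0, ∞)`. Since `(r f(r))'' = r (f'' + 2 f'/r)`,
this says that `r f(r)` is affine, `r f(r) = m + n r`.
-/

open Filter Topology Set

lemma sq_fst_add_sq_snd_pos {x : ℝ × ℝ} (hx : x ≠ 0) : 0 < x.1 ^ 2 + x.2 ^ 2 := by
  obtain ⟨s, t⟩ := x
  have hst : s ≠ 0 ∨ t ≠ 0 := by
    by_contra! h
    exact hx (by simp [h.1, h.2])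
  rcases hst with h | h <;> positivity

lemma IsOpen.exists_affine_iff_deriv_deriv_eq_zero {s : Set ℝ} (hs : IsOpen s)
    (hs' : IsPreconnected s) {g : ℝ → ℝ} (hg : DifferentiableOn ℝ g s)
    (hg' : DifferentiableOn ℝ (deriv g) s) :
    (∃ a b : ℝ, ∀ r ∈ s, g r = a + b * r) ↔ ∀ r ∈ s, deriv (deriv g) r = 0 := by
  constructor
  · rintro ⟨a, b, hab⟩ r hr
    have hg'_const : deriv g =ᶠ[𝓝 r] fun _ => b := by
      filter_upwards [hs.mem_nhds hr] with u hu
      have hg_affine : g =ᶠ[𝓝 u] fun r => a + b * r := by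
        filter_upwards [hs.mem_nhds hu] using hab
      rw [hg_affine.deriv_eq]
      simp
    rw [hg'_const.deriv_eq, deriv_const]
  · intro h
    obtain ⟨b, hb⟩ := hs.exists_is_const_of_deriv_eq_zero hs' hg' h
    obtain ⟨a, ha⟩ := hs.exists_eq_add_of_deriv_eq hs' hg
      (differentiableOn_id.const_mul b) fun r hr => by simp [hb r hr]
    exact ⟨a, b, fun r hr => (ha hr).trans (add_comm _ _)⟩

lemma deriv_id_mul {f : ℝ → ℝ} {u : ℝ} (hf : DifferentiableAt ℝ f u) :
    deriv (fun u => u * f u) u = f u + u * deriv f u :=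
  ((hasDerivAt_id' u).mul hf.hasDerivAt).deriv.trans (by ring)

lemma deriv_deriv_id_mul {s : Set ℝ} (hs : IsOpen s) {f : ℝ → ℝ} (hf : DifferentiableOn ℝ f s)
    (hf' : DifferentiableOn ℝ (deriv f) s) {r : ℝ} (hr : r ∈ s) :
    deriv (deriv fun u => u * f u) r = r * deriv (deriv f) r + 2 * deriv f r := by
  have hd : deriv (fun u => u * f u) =ᶠ[𝓝 r] fun u => f u + u * deriv f u := by
    filter_upwards [hs.mem_nhds hr] with u hu
    exact deriv_id_mul (hf.differentiableAt (hs.mem_nhds hu))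
  rw [hd.deriv_eq]
  have hf_r := (hf.differentiableAt (hs.mem_nhds hr)).hasDerivAt
  have hf'_r := (hf'.differentiableAt (hs.mem_nhds hr)).hasDerivAt
  exact (hf_r.add ((hasDerivAt_id' r).mul hf'_r)).deriv.trans (by ring)

lemma exists_eq_div_add_iff_deriv_deriv {f : ℝ → ℝ} (hf : DifferentiableOn ℝ f (Ioi 0))
    (hf' : DifferentiableOn ℝ (deriv f) (Ioi 0)) :
    (∃ m n : ℝ, ∀ r : ℝ, 0 < r → f r = m / r + n) ↔
      ∀ r : ℝ, 0 < r → deriv (deriv f) r + 2 * deriv f r / r = 0 := by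
  have hg : DifferentiableOn ℝ (fun u => u * f u) (Ioi 0) := differentiableOn_id.mul hf
  have hg' : DifferentiableOn ℝ (deriv fun u => u * f u) (Ioi 0) := by
    refine (hf.add (differentiableOn_id.mul hf')).congr fun u hu => ?_
    exact deriv_id_mul (hf.differentiableAt (isOpen_Ioi.mem_nhds hu))
  have h_affine : (∃ m n : ℝ, ∀ r : ℝ, 0 < r → f r = m / r + n) ↔
      ∃ m n : ℝ, ∀ r ∈ Ioi (0 : ℝ), r * f r = m + n * r := by
    refine exists₂_congr fun m n => forall₂_congr fun r (hr : 0 < r) => ?_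
    rw [div_add' _ _ _ hr.ne', eq_div_iff hr.ne', mul_comm]
  rw [h_affine, isOpen_Ioi.exists_affine_iff_deriv_deriv_eq_zero isPreconnected_Ioi hg hg']
  refine forall₂_congr fun r (hr : 0 < r) => ?_
  rw [deriv_deriv_id_mul isOpen_Ioi hf hf' hr,
    show r * deriv (deriv f) r + 2 * deriv f r = r * (deriv (deriv f) r + 2 * deriv f r / r) by
      field_simp, mul_eq_zero, or_iff_right hr.ne']

lemma hasDerivAt_radial_fst {f : ℝ → ℝ} {f' s t : ℝ} (hst : 0 < s ^ 2 + t ^ 2)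
    (hf : HasDerivAt f f' √(s ^ 2 + t ^ 2)) :
    HasDerivAt (fun u => radial f (u, t)) (s * (f' / √(s ^ 2 + t ^ 2))) s := by
  have hsqrt : HasDerivAt (fun u => √(u ^ 2 + t ^ 2)) (2 * s / (2 * √(s ^ 2 + t ^ 2))) s := by
    simpa using ((hasDerivAt_pow 2 s).add_const (t ^ 2)).sqrt hst.ne'
  refine (hf.comp s hsqrt).congr_deriv ?_
  field_simp [(sqrt_pos.2 hst).ne']

lemma radial_swap (f : ℝ → ℝ) (s t : ℝ) : radial f (t, s) = radial f (s, t) := by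
  simp only [radial, add_comm]

lemma pd2_radial_eq_pd1 (f : ℝ → ℝ) (s t : ℝ) : pd2 (radial f) (s, t) = pd1 (radial f) (t, s) := by
  simp only [pd1, pd2, radial_swap]

section RadialDerivatives

variable {f : ℝ → ℝ} {s t : ℝ}

lemma pd1_radial (hst : 0 < s ^ 2 + t ^ 2) (hf : DifferentiableAt ℝ f √(s ^ 2 + t ^ 2)) :
    pd1 (radial f) (s, t) = s * (deriv f √(s ^ 2 + t ^ 2) / √(s ^ 2 + t ^ 2)) :=
  (hasDerivAt_radial_fst hst hf.hasDerivAt).deriv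

lemma pd2_radial (hst : 0 < s ^ 2 + t ^ 2) (hf : DifferentiableAt ℝ f √(s ^ 2 + t ^ 2)) :
    pd2 (radial f) (s, t) = t * (deriv f √(s ^ 2 + t ^ 2) / √(s ^ 2 + t ^ 2)) := by
  rw [pd2_radial_eq_pd1, pd1_radial (by linarith) (by rwa [add_comm]), add_comm (t ^ 2)]

lemma eventually_sq_add_sq_pos (hst : 0 < s ^ 2 + t ^ 2) : ∀ᶠ u in 𝓝 s, 0 < u ^ 2 + t ^ 2 :=
  ((by fun_prop : Continuous fun u : ℝ => u ^ 2 + t ^ 2).tendsto s).eventually (lt_mem_nhds hst)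

lemma hasDerivAt_deriv_div_radial_fst (hst : 0 < s ^ 2 + t ^ 2)
    (hf' : DifferentiableAt ℝ (deriv f) √(s ^ 2 + t ^ 2)) :
    HasDerivAt (fun u => deriv f √(u ^ 2 + t ^ 2) / √(u ^ 2 + t ^ 2))
      (s * ((deriv (deriv f) √(s ^ 2 + t ^ 2) * √(s ^ 2 + t ^ 2) - deriv f √(s ^ 2 + t ^ 2))
        / √(s ^ 2 + t ^ 2) ^ 2 / √(s ^ 2 + t ^ 2))) s := by
  have h := hf'.hasDerivAt.div (hasDerivAt_id' _) (sqrt_pos.2 hst).ne'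
  simp only [mul_one] at h
  exact hasDerivAt_radial_fst (f := fun r => deriv f r / r) hst h

lemma pd1_pd1_radial (hf : DifferentiableOn ℝ f (Ioi 0))
    (hf' : DifferentiableOn ℝ (deriv f) (Ioi 0)) (hst : 0 < s ^ 2 + t ^ 2) :
    pd1 (pd1 (radial f)) (s, t) = deriv (deriv f) √(s ^ 2 + t ^ 2) * s ^ 2 / √(s ^ 2 + t ^ 2) ^ 2
      + deriv f √(s ^ 2 + t ^ 2) * t ^ 2 / √(s ^ 2 + t ^ 2) ^ 3 := by
  have hpd1 : (fun u => pd1 (radial f) (u, t)) =ᶠ[𝓝 s]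
      fun u => u * (deriv f √(u ^ 2 + t ^ 2) / √(u ^ 2 + t ^ 2)) := by
    filter_upwards [eventually_sq_add_sq_pos hst] with u hu
    exact pd1_radial hu (hf.differentiableAt (Ioi_mem_nhds (sqrt_pos.2 hu)))
  have hρ := sqrt_pos.2 hst
  rw [pd1, hpd1.deriv_eq, ((hasDerivAt_id' s).fun_mul (hasDerivAt_deriv_div_radial_fst hst
    (hf'.differentiableAt (Ioi_mem_nhds hρ)))).deriv]
  field_simp
  linear_combination (deriv f √(s ^ 2 + t ^ 2)) * sq_sqrt hst.le

lemma pd1_pd2_radial (hf : DifferentiableOn ℝ f (Ioi 0))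
    (hf' : DifferentiableOn ℝ (deriv f) (Ioi 0)) (hst : 0 < s ^ 2 + t ^ 2) :
    pd1 (pd2 (radial f)) (s, t) = s * t * (deriv (deriv f) √(s ^ 2 + t ^ 2) / √(s ^ 2 + t ^ 2) ^ 2
      - deriv f √(s ^ 2 + t ^ 2) / √(s ^ 2 + t ^ 2) ^ 3) := by
  have hpd2 : (fun u => pd2 (radial f) (u, t)) =ᶠ[𝓝 s]
      fun u => t * (deriv f √(u ^ 2 + t ^ 2) / √(u ^ 2 + t ^ 2)) := by
    filter_upwards [eventually_sq_add_sq_pos hst] with u hu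
    exact pd2_radial hu (hf.differentiableAt (Ioi_mem_nhds (sqrt_pos.2 hu)))
  have hρ := sqrt_pos.2 hst
  rw [pd1, hpd2.deriv_eq, ((hasDerivAt_deriv_div_radial_fst hst
    (hf'.differentiableAt (Ioi_mem_nhds hρ))).const_mul t).deriv]
  field_simp

lemma pd2_pd2_radial (hf : DifferentiableOn ℝ f (Ioi 0))
    (hf' : DifferentiableOn ℝ (deriv f) (Ioi 0)) (hst : 0 < s ^ 2 + t ^ 2) :
    pd2 (pd2 (radial f)) (s, t) = deriv (deriv f) √(s ^ 2 + t ^ 2) * t ^ 2 / √(s ^ 2 + t ^ 2) ^ 2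
      + deriv f √(s ^ 2 + t ^ 2) * s ^ 2 / √(s ^ 2 + t ^ 2) ^ 3 := by
  have h : pd2 (pd2 (radial f)) (s, t) = pd1 (pd1 (radial f)) (t, s) := by
    change deriv (fun v => pd2 (radial f) (s, v)) t = _
    simp only [pd2_radial_eq_pd1]
    rfl
  rw [h, pd1_pd1_radial hf hf' (by linarith), add_comm (t ^ 2)]

end RadialDerivatives

noncomputable def parabolicBertrandDarboux (V : ℝ × ℝ → ℝ) (x : ℝ × ℝ) : ℝ :=
  3 * pd2 V x + x.2 * (pd2 (pd2 V) x - pd1 (pd1 V) x) + 2 * x.1 * pd1 (pd2 V) x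

lemma parabolicBertrandDarboux_radial {f : ℝ → ℝ} (hf : DifferentiableOn ℝ f (Ioi 0))
    (hf' : DifferentiableOn ℝ (deriv f) (Ioi 0)) {s t : ℝ} (hst : 0 < s ^ 2 + t ^ 2) :
    parabolicBertrandDarboux (radial f) (s, t) =
      t * (deriv (deriv f) √(s ^ 2 + t ^ 2) + 2 * deriv f √(s ^ 2 + t ^ 2) / √(s ^ 2 + t ^ 2)) := by
  have hρ := sqrt_pos.2 hst
  rw [parabolicBertrandDarboux, pd2_radial hst (hf.differentiableAt (Ioi_mem_nhds hρ)),
    pd1_pd1_radial hf hf' hst, pd2_pd2_radial hf hf' hst, pd1_pd2_radial hf hf' hst]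
  have hsq := sq_sqrt hst.le
  set ρ := √(s ^ 2 + t ^ 2)
  field_simp
  rw [show s ^ 2 = ρ ^ 2 - t ^ 2 by linarith]
  ring

/-- A radial potential `V(x) = f(‖x‖)` satisfies the Bertrand–Darboux PDE of the
parabolic Killing tensor `K(0,0,0,0,1,0)`, namely
`3∂₂V + x₂(∂₂₂V − ∂₁₁V) + 2x₁∂₁₂V = 0` on `ℝ² ∖ {0}`, if and only if
`f(r) = m/r + n` for some constants `m, n`. -/
theorem radial_parabolic_pde_iff_kepler
    (f : ℝ → ℝ) (hf : ContDiffOn ℝ (⊤ : ℕ∞) f (Set.Ioi 0)) :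
    (∀ x : ℝ × ℝ, x ≠ 0 →
      3 * pd2 (radial f) x
        + x.2 * (pd2 (pd2 (radial f)) x - pd1 (pd1 (radial f)) x)
        + 2 * x.1 * pd1 (pd2 (radial f)) x = 0) ↔
    ∃ m n : ℝ, ∀ r : ℝ, 0 < r → f r = m / r + n := by
  change (∀ x : ℝ × ℝ, x ≠ 0 → parabolicBertrandDarboux (radial f) x = 0) ↔ _
  have hf₁ : DifferentiableOn ℝ f (Ioi 0) := hf.differentiableOn (by simp)
  have hf₂ : DifferentiableOn ℝ (deriv f) (Ioi 0) :=
    (hf.deriv_of_isOpen isOpen_Ioi (m := 1) (WithTop.coe_le_coe.2 le_top)).differentiableOn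
      one_ne_zero
  rw [exists_eq_div_add_iff_deriv_deriv hf₁ hf₂]
  constructor
  · intro h r hr
    have h0r := h (0, r) (by simp [Prod.ext_iff, hr.ne'])
    rw [parabolicBertrandDarboux_radial hf₁ hf₂ (by positivity)] at h0r
    simpa [sqrt_sq hr.le, hr.ne'] using h0r
  · rintro h ⟨s, t⟩ hst
    rw [parabolicBertrandDarboux_radial hf₁ hf₂ (sq_fst_add_sq_snd_pos hst),
      h _ (sqrt_pos.2 (sq_fst_add_sq_snd_pos hst)), mul_zero]
end
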